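/- arXiv:2206.08749 — 8 statements merged into one kernel-verified Lean document; each statement's English description precedes it below -/
import Mathlib

section
/- Let x, y, z ∈ ℝ, let λ ∈ ℝ be nonzero, and let e_1,…,e_5 ∈ ℝ satisfy e_1 = λ(z(1−x−y−z) + 2yz), e_2 = λ(y(1−x−y−z) + 2yz), e_3 = λ(x(1−x−y−z) + 2yz), e_4 = λ(−2xy + 2yz), e_5 = λ(−2xz + 2yz). Define f = (2e_2e_5 + 2e_1e_4 − 3e_1e_2 − e_4e_5)(e_1 + e_4 − e_2 − e_5) + (e_2 − e_1)(e_5 − e_1)(e_2 − e_4), f_x = (e_1 − e_5)(e_5 − e_4)(e_2 − e_4), f_y = (e_2e_5 − e_1e_4)(e_2 − e_4), f_z = (e_2e_5 − e_1e_4)(e_1 − e_5). If f ≠ 0, then x = f_x/f, y = f_y/f, and z = f_z/f. -/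
noncomputable section

/-- recovery of the coordinates `(x,y,z)` of a world point from any
nonzero scalar multiple `(e₁,…,e₅)` of the quintuple of quadratic expressions,
via the closed-form rational formulas. -/
theorem stmt6 (x y z lam : ℝ) (hlam : lam ≠ 0)
    (e1 e2 e3 e4 e5 : ℝ)
    (h1 : e1 = lam * (z * (1 - x - y - z) + 2 * y * z))
    (h2 : e2 = lam * (y * (1 - x - y - z) + 2 * y * z))
    (h3 : e3 = lam * (x * (1 - x - y - z) + 2 * y * z))
    (h4 : e4 = lam * (-2 * x * y + 2 * y * z))
    (h5 : e5 = lam * (-2 * x * z + 2 * y * z))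
    (f fx fy fz : ℝ)
    (hf : f = (2 * e2 * e5 + 2 * e1 * e4 - 3 * e1 * e2 - e4 * e5) * (e1 + e4 - e2 - e5)
      + (e2 - e1) * (e5 - e1) * (e2 - e4))
    (hfx : fx = (e1 - e5) * (e5 - e4) * (e2 - e4))
    (hfy : fy = (e2 * e5 - e1 * e4) * (e2 - e4))
    (hfz : fz = (e2 * e5 - e1 * e4) * (e1 - e5))
    (hne : f ≠ 0) :
    x = fx / f ∧ y = fy / f ∧ z = fz / f := by
  subst h1 h2 h3 h4 h5 hf hfx hfy hfz
  refine ⟨?_, ?_, ?_⟩ <;> (rw [eq_div_iff hne]; ring)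
end
end

section
/- Let x_1, x_2, x_3, x_4 ∈ ℝ² and let P be a real 3×4 matrix whose (3,4)-entry equals 1. Set α = P_{3,3} + 1, β = P_{3,2} + 1, γ = P_{3,1} + 1. Then the following are equivalent: (i) P·[X_m;1] ∼ [x_m;1] for m = 1,2,3,4, where X_1 = (0,0,0), X_2 = (0,0,1), X_3 = (0,1,0), X_4 = (1,0,0); (ii) α, β, γ are all nonzero and P = Q·D, where Q is the 3×4 matrix whose columns are [x_4;1], [x_3;1], [x_2;1], [x_1;1], and D is the 4×4 matrix with rows (γ,0,0,0), (0,β,0,0), (0,0,α,0), (−1,−1,−1,1). -/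
open Matrix

noncomputable section

/-- Homogeneous lift of a point of `ℝ³`. -/
def lift3 (X : Fin 3 → ℝ) : Fin 4 → ℝ := Fin.snoc X 1

/-- Homogeneous lift of a point of `ℝ²`. -/
def lift2 (x : Fin 2 → ℝ) : Fin 3 → ℝ := Fin.snoc x 1

/-- `a ∼ b` : the vectors are parallel, i.e. equal up to a nonzero scalar. -/
def Par {n : ℕ} (a b : Fin n → ℝ) : Prop := ∃ lam : ℝ, lam ≠ 0 ∧ a = lam • b

/-! `P·[X;1]` is the last column `p₄` of `P` plus the combination of the other columns with
coefficients `X`, and a vector is `∼ [x;1]` iff it is its own last entry times `[x;1]`. Since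
`P₃₄ = 1`, the four conditions say `p₄ = [x₁;1]`, `p₃ + p₄ = α[x₂;1]`, `p₂ + p₄ = β[x₃;1]`,
`p₁ + p₄ = γ[x₄;1]` with `α, β, γ ≠ 0`, and these are exactly the columns of `Q·D`. -/

theorem par_snoc_one_iff {n : ℕ} (v : Fin (n + 1) → ℝ) (x : Fin n → ℝ) :
    Par v (Fin.snoc x 1) ↔ v (Fin.last n) ≠ 0 ∧ v = v (Fin.last n) • Fin.snoc x 1 := by
  constructor
  · rintro ⟨c, hc, rfl⟩
    simpa using hc
  · rintro ⟨hv, hv'⟩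
    exact ⟨_, hv, hv'⟩

theorem mulVec_snoc_one {R ι : Type*} [CommSemiring R] {n : ℕ} (P : Matrix ι (Fin (n + 1)) R)
    (X : Fin n → R) : P *ᵥ Fin.snoc X 1 = ∑ i, X i • P.col i.castSucc + P.col (Fin.last n) := by
  ext k
  simp [mulVec, dotProduct, Fin.sum_univ_castSucc, mul_comm]

theorem col_mul_eq_sum {R ι κ ν : Type*} [CommSemiring R] [Fintype κ] (A : Matrix ι κ R)
    (D : Matrix κ ν R) (j : ν) : (A * D).col j = ∑ k, D k j • A.col k := by
  ext i
  simp [mul_apply, mul_comm]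

theorem col_of_swap {α ι κ : Type*} (L : κ → ι → α) : (of fun i k => L k i).col = L :=
  rfl

theorem eq_iff_forall_col_eq {α ι κ : Type*} {A B : Matrix ι κ α} :
    A = B ↔ ∀ j, A.col j = B.col j :=
  ⟨fun h _ => h ▸ rfl, ext_col⟩

/-- a projection matrix with `(3,4)`-entry `1` is consistent with the four
canonical world points `(0,0,0)`, `(0,0,1)`, `(0,1,0)`, `(1,0,0)` iff it factors as `Q·D`
with `α = P₃₃+1`, `β = P₃₂+1`, `γ = P₃₁+1` all nonzero. Here `x 0,…,x 3` are
`x_1,…,x_4`. -/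
theorem stmt7 (x : Fin 4 → Fin 2 → ℝ) (P : Matrix (Fin 3) (Fin 4) ℝ) (hP : P 2 3 = 1)
    (α β γ : ℝ) (hα : α = P 2 2 + 1) (hβ : β = P 2 1 + 1) (hγ : γ = P 2 0 + 1)
    (XX : Fin 4 → Fin 3 → ℝ)
    (hX : XX = ![![0,0,0], ![0,0,1], ![0,1,0], ![1,0,0]])
    (Q : Matrix (Fin 3) (Fin 4) ℝ)
    (hQ : Q = Matrix.of fun i j => ![lift2 (x 3), lift2 (x 2), lift2 (x 1), lift2 (x 0)] j i)
    (D : Matrix (Fin 4) (Fin 4) ℝ)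
    (hD : D = !![γ, 0, 0, 0; 0, β, 0, 0; 0, 0, α, 0; -1, -1, -1, 1]) :
    (∀ m, Par (P.mulVec (lift3 (XX m))) (lift2 (x m))) ↔
      (α ≠ 0 ∧ β ≠ 0 ∧ γ ≠ 0 ∧ P = Q * D) := by
  have hcamera : (∀ m, Par (P.mulVec (lift3 (XX m))) (lift2 (x m))) ↔
      P.col 3 = lift2 (x 0) ∧ (α ≠ 0 ∧ P.col 2 + P.col 3 = α • lift2 (x 1)) ∧
        (β ≠ 0 ∧ P.col 1 + P.col 3 = β • lift2 (x 2)) ∧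
        (γ ≠ 0 ∧ P.col 0 + P.col 3 = γ • lift2 (x 3)) := by
    simp only [hX, Fin.forall_fin_succ, IsEmpty.forall_iff, lift3, lift2, mulVec_snoc_one,
      par_snoc_one_iff]
    simp [Fin.sum_univ_three, hP, ← hα, ← hβ, ← hγ]
  have hfactor : P = Q * D ↔
      P.col 0 = γ • lift2 (x 3) - lift2 (x 0) ∧ P.col 1 = β • lift2 (x 2) - lift2 (x 0) ∧
        P.col 2 = α • lift2 (x 1) - lift2 (x 0) ∧ P.col 3 = lift2 (x 0) := by
    simp only [eq_iff_forall_col_eq, hQ, hD, col_mul_eq_sum, col_of_swap, Fin.forall_fin_succ,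
      IsEmpty.forall_iff]
    simp [Fin.sum_univ_four, sub_eq_add_neg]
  rw [hcamera, hfactor]
  simp only [eq_sub_iff_add_eq]
  grind
end
end

section
/- Let x_1,…,x_5 ∈ ℝ² with ξ_{34,5} ≠ 0, let α ∈ ℝ, and define β = (2ξ_{14,5} − ξ_{24,5}·α)/ξ_{34,5} and γ = (ξ_{23,5}·α − 2ξ_{13,5})/ξ_{34,5}. Then γ·(x_4 − x_5) + β·(x_3 − x_5) + α·(x_2 − x_5) = 2·(x_1 − x_5). Consequently, if P = Q·D where Q is the 3×4 matrix with columns [x_4;1], [x_3;1], [x_2;1], [x_1;1] and D is the 4×4 matrix with rows (γ,0,0,0), (0,β,0,0), (0,0,α,0), (−1,−1,−1,1), then P·(1,1,1,1)ᵀ = (α + β + γ − 2)·[x_5;1]; in particular, if α + β + γ ≠ 2 then P·[X_5;1] ∼ [x_5;1] for X_5 = (1,1,1). -/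
open Matrix

noncomputable section

/-- `ξ_{ab,c}` : determinant of the 2×2 matrix with columns `c − a` and `c − b`. -/
def xi (a b c : Fin 2 → ℝ) : ℝ := (c 0 - a 0) * (c 1 - b 1) - (c 0 - b 0) * (c 1 - a 1)

/-- the fifth-point consistency identity. Here `x 0,…,x 4` are
`x_1,…,x_5`, so e.g. `ξ_{34,5} = xi (x 2) (x 3) (x 4)`. -/
theorem stmt8 (x : Fin 5 → Fin 2 → ℝ) (hxi : xi (x 2) (x 3) (x 4) ≠ 0)
    (α β γ : ℝ)
    (hβ : β = (2 * xi (x 0) (x 3) (x 4) - xi (x 1) (x 3) (x 4) * α) / xi (x 2) (x 3) (x 4))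
    (hγ : γ = (xi (x 1) (x 2) (x 4) * α - 2 * xi (x 0) (x 2) (x 4)) / xi (x 2) (x 3) (x 4))
    (Q : Matrix (Fin 3) (Fin 4) ℝ)
    (hQ : Q = Matrix.of fun i j => ![lift2 (x 3), lift2 (x 2), lift2 (x 1), lift2 (x 0)] j i)
    (D : Matrix (Fin 4) (Fin 4) ℝ)
    (hD : D = !![γ, 0, 0, 0; 0, β, 0, 0; 0, 0, α, 0; -1, -1, -1, 1])
    (P : Matrix (Fin 3) (Fin 4) ℝ) (hPQD : P = Q * D) :
    (γ • (x 3 - x 4) + β • (x 2 - x 4) + α • (x 1 - x 4) = (2 : ℝ) • (x 0 - x 4)) ∧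
    P.mulVec ![1,1,1,1] = (α + β + γ - 2) • lift2 (x 4) ∧
    (α + β + γ ≠ 2 → Par (P.mulVec (lift3 ![1,1,1])) (lift2 (x 4))) := by

  have hβ' : β * xi (x 2) (x 3) (x 4)
      = 2 * xi (x 0) (x 3) (x 4) - xi (x 1) (x 3) (x 4) * α := by
    rw [hβ, div_mul_cancel₀ _ hxi]
  have hγ' : γ * xi (x 2) (x 3) (x 4)
      = xi (x 1) (x 2) (x 4) * α - 2 * xi (x 0) (x 2) (x 4) := by
    rw [hγ, div_mul_cancel₀ _ hxi]
  have key0 : γ * (x 3 0 - x 4 0) + β * (x 2 0 - x 4 0) + α * (x 1 0 - x 4 0)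
      = 2 * (x 0 0 - x 4 0) := by
    refine mul_left_cancel₀ hxi ?_
    simp only [xi] at hβ' hγ' ⊢
    linear_combination (x 3 0 - x 4 0) * hγ' + (x 2 0 - x 4 0) * hβ'
  have key1 : γ * (x 3 1 - x 4 1) + β * (x 2 1 - x 4 1) + α * (x 1 1 - x 4 1)
      = 2 * (x 0 1 - x 4 1) := by
    refine mul_left_cancel₀ hxi ?_
    simp only [xi] at hβ' hγ' ⊢
    linear_combination (x 3 1 - x 4 1) * hγ' + (x 2 1 - x 4 1) * hβ'
  have h1 : γ • (x 3 - x 4) + β • (x 2 - x 4) + α • (x 1 - x 4) = (2 : ℝ) • (x 0 - x 4) := by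
    funext i
    fin_cases i
    · exact key0
    · exact key1
  have hvec : P.mulVec ![1,1,1,1] = (α + β + γ - 2) • lift2 (x 4) := by
    subst hPQD hQ hD
    funext i
    fin_cases i
    · show _ = (α + β + γ - 2) * x 4 0
      simp [Matrix.mulVec, Matrix.mul_apply, Fin.sum_univ_four, lift2, Fin.snoc,
        dotProduct]
      norm_num [Fin.castPred, Fin.castLT]
      linear_combination key0
    · show _ = (α + β + γ - 2) * x 4 1
      simp [Matrix.mulVec, Matrix.mul_apply, Fin.sum_univ_four, lift2, Fin.snoc,
        dotProduct]
      norm_num [Fin.castPred, Fin.castLT]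
      linear_combination key1
    · show _ = (α + β + γ - 2) * 1
      simp [Matrix.mulVec, Matrix.mul_apply, Fin.sum_univ_four, lift2, Fin.snoc,
        dotProduct]
      ring
  refine ⟨h1, hvec, fun hne => ?_⟩
  have h3 : lift3 ![1,1,1] = ![1,1,1,1] := by
    funext i; fin_cases i <;> rfl
  exact ⟨α + β + γ - 2, sub_ne_zero.mpr hne, by rw [h3, hvec]⟩
end
end

section
/- Let x_1,…,x_5 ∈ ℝ² with ξ_{34,5} ≠ 0, and let P be a real 3×4 matrix with (3,4)-entry equal to 1 satisfying P·[X_m;1] ∼ [x_m;1] for m = 1,…,5, where X_1 = (0,0,0), X_2 = (0,0,1), X_3 = (0,1,0), X_4 = (1,0,0), X_5 = (1,1,1). Then, setting α = P_{3,3} + 1, necessarily P_{3,2} + 1 = (2ξ_{14,5} − ξ_{24,5}·α)/ξ_{34,5} and P_{3,1} + 1 = (ξ_{23,5}·α − 2ξ_{13,5})/ξ_{34,5}. -/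
open Matrix

noncomputable section

lemma lift3_eq (a b c : ℝ) : lift3 ![a,b,c] = ![a,b,c,1] := by
  funext i; fin_cases i <;> simp [lift3, Fin.snoc] <;> rfl

lemma lift2_eq (x : Fin 2 → ℝ) : lift2 x = ![x 0, x 1, 1] := by
  funext i; fin_cases i <;> simp [lift2, Fin.snoc] <;> rfl

/-- eq. (Camera_from_Point_3): consistency with the five canonical
world points forces `P₃₂+1` and `P₃₁+1` to be the stated functions of `α = P₃₃+1`.
Here `x 0,…,x 4` are `x_1,…,x_5`. -/
theorem stmt9 (x : Fin 5 → Fin 2 → ℝ) (hxi : xi (x 2) (x 3) (x 4) ≠ 0)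
    (P : Matrix (Fin 3) (Fin 4) ℝ) (hP : P 2 3 = 1)
    (XX : Fin 5 → Fin 3 → ℝ)
    (hX : XX = ![![0,0,0], ![0,0,1], ![0,1,0], ![1,0,0], ![1,1,1]])
    (hsol : ∀ m, Par (P.mulVec (lift3 (XX m))) (lift2 (x m))) :
    P 2 1 + 1 =
      (2 * xi (x 0) (x 3) (x 4) - xi (x 1) (x 3) (x 4) * (P 2 2 + 1)) / xi (x 2) (x 3) (x 4) ∧
    P 2 0 + 1 =
      (xi (x 1) (x 2) (x 4) * (P 2 2 + 1) - 2 * xi (x 0) (x 2) (x 4)) / xi (x 2) (x 3) (x 4) := by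
  subst hX
  obtain ⟨l0, hl0, h0⟩ := hsol 0
  obtain ⟨l1, hl1, h1⟩ := hsol 1
  obtain ⟨l2, hl2, h2⟩ := hsol 2
  obtain ⟨l3, hl3, h3⟩ := hsol 3
  obtain ⟨l4, hl4, h4⟩ := hsol 4
  simp only [Matrix.cons_val_zero, Matrix.cons_val_one, Matrix.head_cons,
    Matrix.cons_val_two, Matrix.tail_cons, Matrix.cons_val_three, Matrix.cons_val_four,
    lift3_eq, lift2_eq] at h0 h1 h2 h3 h4
  -- component equations
  have c0 := fun i => congrFun h0 i
  have c1 := fun i => congrFun h1 i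
  have c2 := fun i => congrFun h2 i
  have c3 := fun i => congrFun h3 i
  have c4 := fun i => congrFun h4 i
  simp only [Matrix.mulVec, dotProduct, Fin.sum_univ_four, Pi.smul_apply,
    smul_eq_mul] at c0 c1 c2 c3 c4
  have e00 := c0 0; have e01 := c0 1; have e02 := c0 2
  have e10 := c1 0; have e11 := c1 1; have e12 := c1 2
  have e20 := c2 0; have e21 := c2 1; have e22 := c2 2
  have e30 := c3 0; have e31 := c3 1; have e32 := c3 2
  have e40 := c4 0; have e41 := c4 1; have e42 := c4 2
  simp only [Matrix.cons_val_zero, Matrix.cons_val_one, Matrix.head_cons,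
    Matrix.cons_val_two, Matrix.tail_cons, Matrix.cons_val_three, Matrix.cons_val_fin_one,
    mul_zero, mul_one, zero_add, add_zero] at e00 e01 e02 e10 e11 e12 e20 e21 e22 e30 e31 e32 e40 e41 e42
  rw [hP] at e02 e12 e22 e32 e42
  subst e02; subst e12; subst e22; subst e32; subst e42
  rw [one_mul] at e00 e01
  constructor
  · rw [eq_div_iff hxi]
    simp only [xi]
    linear_combination (x 3 1 - x 4 1) * (e40 - e10 - e20 - e30 + 2*e00)
      - (x 3 0 - x 4 0) * (e41 - e11 - e21 - e31 + 2*e01)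
  · rw [eq_div_iff hxi]
    simp only [xi]
    linear_combination (x 4 1 - x 2 1) * (e40 - e10 - e20 - e30 + 2*e00)
      - (x 4 0 - x 2 0) * (e41 - e11 - e21 - e31 + 2*e01)
end
end

section
/- Let N ≥ 1 and let x̂_m^{(n)} ∈ ℝ² (1 ≤ m ≤ 4, 1 ≤ n ≤ N) be arbitrary families of image points. Then there exist world points X_1, X_2, X_3, X_4 ∈ ℝ³ and real 3×4 matrices P_1,…,P_N such that P_n·[X_m;1] ∼ [x̂_m^{(n)};1] for all 1 ≤ m ≤ 4 and 1 ≤ n ≤ N. In particular, for M ≤ 4 the reprojection-error objective of the WPfC problem attains the value zero (a global optimum). -/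
open Matrix

noncomputable section

/-- M ≤ 4 case of Proposition 2: arbitrary image-point families of four
world points admit an exact reconstruction, i.e. the reprojection-error objective of
WPfC attains the value zero. -/
theorem stmt10 {N : ℕ} (hN : 1 ≤ N) (xh : Fin 4 → Fin N → Fin 2 → ℝ) :
    ∃ (X : Fin 4 → Fin 3 → ℝ) (P : Fin N → Matrix (Fin 3) (Fin 4) ℝ),
      ∀ m n, Par ((P n).mulVec (lift3 (X m))) (lift2 (xh m n)) := by
  refine ⟨fun m i => if (m : ℕ) = (i : ℕ) then 1 else 0,
    fun n => Matrix.of fun i j =>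
      if (j : ℕ) = 3 then lift2 (xh 3 n) i else lift2 (xh j n) i - lift2 (xh 3 n) i,
    fun m n => ⟨1, one_ne_zero, ?_⟩⟩
  funext i
  simp only [one_smul, Matrix.mulVec, dotProduct, Fin.sum_univ_four, Matrix.of_apply,
    lift3, Fin.snoc]
  fin_cases m <;> norm_num [show ((3:Fin 4):ℕ) = 3 from rfl] <;> rfl
end
end

section
/- Let N ≥ 1 and let x̂_m^{(n)} ∈ ℝ² (1 ≤ m ≤ 5, 1 ≤ n ≤ N) be families of image points such that for each n no three of the five points x̂_1^{(n)},…,x̂_5^{(n)} are collinear. Then there exist world points X_1,…,X_5 ∈ ℝ³ and real 3×4 matrices P_1,…,P_N such that P_n·[X_m;1] ∼ [x̂_m^{(n)};1] for all 1 ≤ m ≤ 5 and 1 ≤ n ≤ N; moreover one may take X_1 = (0,0,0), X_2 = (0,0,1), X_3 = (0,1,0), X_4 = (1,0,0), X_5 = (1,1,1). In particular, for M = 5 the reprojection-error objective of the WPfC problem attains the value zero (a global optimum). -/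
open Matrix

noncomputable section

/-! Any three of the lifts `v m = [x̂ₘ; 1]` are linearly independent (this is non-collinearity),
so `v 0, v 1, v 2` is a basis of `ℝ³` in which `v 3` has no zero coordinate. Hence `t • v 3 - v 4`,
for a generic `t`, gives a relation `∑ c m • v m = 0` with every `c m ≠ 0`. The lifts `W m` of the
canonical world points satisfy `W 1 + W 2 + W 3 - 2 • W 0 = W 4`, so the camera with
`P (W 0) = -(c 0 / 2) • v 0` and `P (W m) = c m • v m` for `m = 1, 2, 3` sends `W 4` to
`-c 4 • v 4`. -/

theorem linearIndependent_snoc_one_of_affineIndependent {K ι : Type*} [Field K] [Fintype ι]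
    {d : ℕ} {p : ι → Fin d → K} (hp : AffineIndependent K p) :
    LinearIndependent K fun i => (Fin.snoc (p i) 1 : Fin (d + 1) → K) := by
  refine Fintype.linearIndependent_iff.2 fun g hg i => ?_
  have hsum : ∑ i, g i = 0 := by simpa using congrFun hg (Fin.last d)
  have hcomb : ∑ i, g i • p i = 0 := funext fun j => by simpa using congrFun hg j.castSucc
  exact hp.eq_zero_of_sum_eq_zero hsum hcomb i (Finset.mem_univ i)

theorem linearIndependent_lift2_of_not_collinear {x y z : Fin 2 → ℝ}
    (h : ¬Collinear ℝ ({x, y, z} : Set (Fin 2 → ℝ))) :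
    LinearIndependent ℝ ![lift2 x, lift2 y, lift2 z] := by
  have hlift : ![lift2 x, lift2 y, lift2 z] = fun i => Fin.snoc (![x, y, z] i) 1 := by
    ext i : 1
    fin_cases i <;> rfl
  rw [hlift]
  exact linearIndependent_snoc_one_of_affineIndependent
    (affineIndependent_iff_not_collinear_set.2 h)

theorem ne_zero_of_smul_add_smul_add_smul_eq {K V : Type*} [CommRing K] [Nontrivial K]
    [AddCommGroup V] [Module K V] {u v w x : V} {a b c : K} (hx : a • u + b • v + c • w = x)
    (h : LinearIndependent K ![v, w, x]) : a ≠ 0 := by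
  intro ha
  have hrel : ∑ i, ![b, c, -1] i • ![v, w, x] i = 0 := by
    simp [Fin.sum_univ_three, ← hx, ha]
    module
  simpa using Fintype.linearIndependent_iff.1 h _ hrel 2

theorem exists_sum_smul_eq_zero_forall_ne_zero_of_linearIndependent_triples {K V : Type*} [Field K]
    [Infinite K] [AddCommGroup V] [Module K V] (hV : Module.finrank K V = 3) (v : Fin 5 → V)
    (h : ∀ i j k, i ≠ j → i ≠ k → j ≠ k → LinearIndependent K ![v i, v j, v k]) :
    ∃ c : Fin 5 → K, (∀ m, c m ≠ 0) ∧ ∑ m, c m • v m = 0 := by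
  classical
  have hspan : ∀ x, ∃ a : Fin 3 → K, a 0 • v 0 + a 1 • v 1 + a 2 • v 2 = x := by
    intro x
    have htop := (h 0 1 2 (by decide) (by decide) (by decide)).span_eq_top_of_card_eq_finrank
      (by simp [hV])
    obtain ⟨a, ha⟩ := (Submodule.mem_span_range_iff_exists_fun K).1 (htop ▸ Submodule.mem_top)
    exact ⟨a, by simpa [Fin.sum_univ_three] using ha⟩
  obtain ⟨a, ha⟩ := hspan (v 3)
  obtain ⟨b, hb⟩ := hspan (v 4)
  have ha_ne : a 0 ≠ 0 ∧ a 1 ≠ 0 ∧ a 2 ≠ 0 := by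
    refine ⟨?_, ?_, ?_⟩
    · exact ne_zero_of_smul_add_smul_add_smul_eq ha (h 1 2 3 (by decide) (by decide) (by decide))
    · exact ne_zero_of_smul_add_smul_add_smul_eq (u := v 1) (v := v 0) (w := v 2)
        (by rw [← ha]; module) (h 0 2 3 (by decide) (by decide) (by decide))
    · exact ne_zero_of_smul_add_smul_add_smul_eq (u := v 2) (v := v 0) (w := v 1)
        (by rw [← ha]; module) (h 0 1 3 (by decide) (by decide) (by decide))
  obtain ⟨t, ht⟩ := Infinite.exists_notMem_finset (insert 0 (Finset.univ.image fun i => b i / a i))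
  simp only [Finset.mem_insert, Finset.mem_image, Finset.mem_univ, true_and, not_or,
    not_exists] at ht
  refine ⟨![t * a 0 - b 0, t * a 1 - b 1, t * a 2 - b 2, -t, 1], ?_, ?_⟩
  · have hti : ∀ i, a i ≠ 0 → t * a i - b i ≠ 0 := fun i hai hi =>
      ht.2 i (by rw [div_eq_iff hai]; linear_combination -hi)
    intro m
    fin_cases m <;> simp [hti, ha_ne, ht.1]
  · simp [Fin.sum_univ_five, ← ha, ← hb]
    module

theorem par_smul {n : ℕ} {a : Fin n → ℝ} {c : ℝ} (hc : c ≠ 0) : Par (c • a) a := ⟨c, hc, rfl⟩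

def canonicalPoints : Fin 5 → Fin 3 → ℝ := ![![0,0,0], ![0,0,1], ![0,1,0], ![1,0,0], ![1,1,1]]

theorem exists_camera_of_sum_smul_eq_zero (v : Fin 5 → Fin 3 → ℝ) (c : Fin 5 → ℝ)
    (hc : ∀ m, c m ≠ 0) (hsum : ∑ m, c m • v m = 0) :
    ∃ P : Matrix (Fin 3) (Fin 4) ℝ, ∀ m, Par (P *ᵥ lift3 (canonicalPoints m)) (v m) := by
  set e := c 0 / 2
  set cols : Fin 4 → Fin 3 → ℝ :=
    ![c 3 • v 3 + e • v 0, c 2 • v 2 + e • v 0, c 1 • v 1 + e • v 0, -e • v 0]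
  have hmulVec : ∀ w, (Matrix.of cols)ᵀ *ᵥ w = ∑ j, w j • cols j := fun w => by
    rw [Matrix.mulVec_transpose, Matrix.vecMul_eq_sum]
    rfl
  refine ⟨(Matrix.of cols)ᵀ, fun m => ?_⟩
  rw [hmulVec]
  fin_cases m
  all_goals simp [cols, canonicalPoints, lift3, Fin.sum_univ_four]
  · exact ⟨-e, by simp [e, hc 0], by rw [neg_smul]⟩
  · exact par_smul (hc 1)
  · exact par_smul (hc 2)
  · exact par_smul (hc 3)
  · refine ⟨-c 4, neg_ne_zero.2 (hc 4), ?_⟩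
    rw [Fin.sum_univ_five] at hsum
    linear_combination (norm := module) hsum

theorem stmt11_general {N : ℕ} (xh : Fin 5 → Fin N → Fin 2 → ℝ)
    (hcol : ∀ n, ∀ i j k : Fin 5, i ≠ j → i ≠ k → j ≠ k →
      ¬ Collinear ℝ ({xh i n, xh j n, xh k n} : Set (Fin 2 → ℝ))) :
    ∃ (X : Fin 5 → Fin 3 → ℝ) (P : Fin N → Matrix (Fin 3) (Fin 4) ℝ),
      (∀ m n, Par ((P n).mulVec (lift3 (X m))) (lift2 (xh m n))) ∧
      X 0 = ![0,0,0] ∧ X 1 = ![0,0,1] ∧ X 2 = ![0,1,0] ∧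
      X 3 = ![1,0,0] ∧ X 4 = ![1,1,1] := by
  have hP : ∀ n, ∃ P : Matrix (Fin 3) (Fin 4) ℝ,
      ∀ m, Par (P *ᵥ lift3 (canonicalPoints m)) (lift2 (xh m n)) := fun n => by
    obtain ⟨c, hc, hsum⟩ := exists_sum_smul_eq_zero_forall_ne_zero_of_linearIndependent_triples
      (by simp) (fun m => lift2 (xh m n)) fun i j k hij hik hjk =>
        linearIndependent_lift2_of_not_collinear (hcol n i j k hij hik hjk)
    exact exists_camera_of_sum_smul_eq_zero _ c hc hsum
  choose P hP using hP
  exact ⟨canonicalPoints, P, fun m n => hP n m, rfl, rfl, rfl, rfl, rfl⟩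

/-- M = 5 case of Proposition 2: if on each image no three of the five
image points are collinear, then the five correspondences admit an exact reconstruction,
with the canonical five world points. -/
theorem stmt11 {N : ℕ} (hN : 1 ≤ N) (xh : Fin 5 → Fin N → Fin 2 → ℝ)
    (hcol : ∀ n, ∀ i j k : Fin 5, i ≠ j → i ≠ k → j ≠ k →
      ¬ Collinear ℝ ({xh i n, xh j n, xh k n} : Set (Fin 2 → ℝ))) :
    ∃ (X : Fin 5 → Fin 3 → ℝ) (P : Fin N → Matrix (Fin 3) (Fin 4) ℝ),
      (∀ m n, Par ((P n).mulVec (lift3 (X m))) (lift2 (xh m n))) ∧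
      X 0 = ![0,0,0] ∧ X 1 = ![0,0,1] ∧ X 2 = ![0,1,0] ∧
      X 3 = ![1,0,0] ∧ X 4 = ![1,1,1] :=
  stmt11_general xh hcol
end
end

section
/- Let a_1, a_2, b_1, b_2, c_1, c_2 ∈ ℝ and set A = a_1² + b_1², B = a_1a_2 + b_1b_2, C = a_2² + b_2². Assume c_1 ≠ 0, (a_1c_2 − a_2c_1, b_1c_2 − b_2c_1) ≠ (0,0), and A·c_2 − B·c_1 ≠ 0. Define g(α) = ((a_1α + a_2)² + (b_1α + b_2)²)/(c_1α + c_2)² on the domain {α ∈ ℝ : c_1α + c_2 ≠ 0}, and let α* = (C·c_1 − B·c_2)/(A·c_2 − B·c_1). Then c_1α* + c_2 ≠ 0, g(α*) ≤ g(α) for every α in the domain, and α* is a root of the quadratic (A·c_1c_2 − B·c_1²)·α² + (A·c_2² − C·c_1²)·α + (B·c_2² − C·c_1c_2) = 0, whose leading coefficient is nonzero and whose discriminant Δ = (A·c_2² − C·c_1²)² − 4(A·c_1c_2 − B·c_1²)(B·c_2² − C·c_1c_2) is nonnegative; hence α* equals [(C·c_1² − A·c_2²) + √Δ]/[2(A·c_1c_2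 − B·c_1²)] or [(C·c_1² − A·c_2²) − √Δ]/[2(A·c_1c_2 − B·c_1²)]. -/
/-! Put `p = (a₁, b₁)`, `q = (a₂, b₂)`, `x = αp + q` and `w = c₂p − c₁q`.
Then `⟨x, w⟩ = (A c₂ − B c₁)α − (C c₁ − B c₂)` and the cross product `x × w` equals
`−(c₁α + c₂)(p × q)` with `(p × q)² = AC − B²`, so Lagrange's identity
`|x|²|w|² − (x × w)² = ⟨x, w⟩²` reads
`g(α)·|w|² = AC − B² + (⟨x, w⟩ / (c₁α + c₂))²`.
Hence `g ≥ (AC − B²)/|w|²` on its domain, with equality at the zero `α*` of `⟨x, w⟩`;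
there `c₁α* + c₂ = |w|² / (A c₂ − B c₁) ≠ 0`.
Multiplying `⟨x, w⟩ = 0` by `c₁α + c₂` gives the quadratic, whose discriminant is then a square. -/

lemma sq_add_sq_pos_of_ne_zero {x y : ℝ} (h : (x, y) ≠ ((0 : ℝ), (0 : ℝ))) : 0 < x ^ 2 + y ^ 2 := by
  refine lt_of_le_of_ne (by positivity) (Ne.symm fun hxy => h ?_)
  rw [add_eq_zero_iff_of_nonneg (sq_nonneg x) (sq_nonneg y), sq_eq_zero_iff, sq_eq_zero_iff] at hxy
  rw [hxy.1, hxy.2]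

lemma nonneg_discrim_and_eq_quadratic_formula {a b c x : ℝ} (ha : a ≠ 0)
    (hx : a * x ^ 2 + b * x + c = 0) :
    0 ≤ discrim a b c ∧
      (x = (-b + √(discrim a b c)) / (2 * a) ∨ x = (-b - √(discrim a b c)) / (2 * a)) := by
  rw [sq] at hx
  have hsq : discrim a b c = (2 * a * x + b) ^ 2 := discrim_eq_sq_of_quadratic_eq_zero hx
  have hnonneg : 0 ≤ discrim a b c := hsq ▸ sq_nonneg _
  exact ⟨hnonneg, (quadratic_eq_zero_iff ha (Real.mul_self_sqrt hnonneg).symm x).mp hx⟩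

lemma div_sq_le_div_sq_of_mul_sub_eq_sq {N D L : ℝ → ℝ} {S K x₀ x : ℝ} (hS : 0 < S)
    (hcert : ∀ x, N x * S - K * D x ^ 2 = L x ^ 2) (hL : L x₀ = 0) (hD₀ : D x₀ ≠ 0)
    (hD : D x ≠ 0) : N x₀ / D x₀ ^ 2 ≤ N x / D x ^ 2 := by
  have hmin : N x₀ / D x₀ ^ 2 = K / S := by
    rw [div_eq_div_iff (by positivity) hS.ne']
    linarith [hcert x₀, show L x₀ ^ 2 = 0 by rw [hL, sq, mul_zero]]
  rw [hmin, div_le_div_iff₀ hS (by positivity)]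
  linarith [hcert x, sq_nonneg (L x)]

lemma sq_add_sq_mul_sub_gram_eq_inner_sq {a1 a2 b1 b2 c1 c2 A B C : ℝ}
    (hA : A = a1 ^ 2 + b1 ^ 2) (hB : B = a1 * a2 + b1 * b2) (hC : C = a2 ^ 2 + b2 ^ 2) (α : ℝ) :
    ((a1 * α + a2) ^ 2 + (b1 * α + b2) ^ 2) * ((a1 * c2 - a2 * c1) ^ 2 + (b1 * c2 - b2 * c1) ^ 2)
      - (A * C - B ^ 2) * (c1 * α + c2) ^ 2
      = ((A * c2 - B * c1) * α - (C * c1 - B * c2)) ^ 2 := by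
  subst hA hB hC; ring

lemma cross_sq_add_sq_eq {a1 a2 b1 b2 c1 c2 A B C : ℝ}
    (hA : A = a1 ^ 2 + b1 ^ 2) (hB : B = a1 * a2 + b1 * b2) (hC : C = a2 ^ 2 + b2 ^ 2) :
    (a1 * c2 - a2 * c1) ^ 2 + (b1 * c2 - b2 * c1) ^ 2
      = c1 * (C * c1 - B * c2) + c2 * (A * c2 - B * c1) := by
  subst hA hB hC; ring

/-- the per-image one-dimensional minimization at the core of
Proposition 3: `α* = (C·c₁ − B·c₂)/(A·c₂ − B·c₁)` globally minimizes
`g(α) = ((a₁α+a₂)² + (b₁α+b₂)²)/(c₁α+c₂)²` and is a root of the stated quadratic,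
whose discriminant is nonnegative, so `α*` is given by the quadratic formula. -/
theorem stmt12 (a1 a2 b1 b2 c1 c2 : ℝ)
    (A B C : ℝ) (hA : A = a1^2 + b1^2) (hB : B = a1*a2 + b1*b2) (hC : C = a2^2 + b2^2)
    (hc1 : c1 ≠ 0)
    (hnz : (a1*c2 - a2*c1, b1*c2 - b2*c1) ≠ ((0 : ℝ), (0 : ℝ)))
    (hAB : A*c2 - B*c1 ≠ 0)
    (g : ℝ → ℝ) (hg : ∀ α, g α = ((a1*α + a2)^2 + (b1*α + b2)^2) / (c1*α + c2)^2)
    (αs : ℝ) (hαs : αs = (C*c1 - B*c2) / (A*c2 - B*c1))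
    (Δ : ℝ)
    (hΔ : Δ = (A*c2^2 - C*c1^2)^2 - 4*(A*c1*c2 - B*c1^2)*(B*c2^2 - C*c1*c2)) :
    c1*αs + c2 ≠ 0 ∧
    (∀ α, c1*α + c2 ≠ 0 → g αs ≤ g α) ∧
    (A*c1*c2 - B*c1^2)*αs^2 + (A*c2^2 - C*c1^2)*αs + (B*c2^2 - C*c1*c2) = 0 ∧
    A*c1*c2 - B*c1^2 ≠ 0 ∧
    0 ≤ Δ ∧
    (αs = ((C*c1^2 - A*c2^2) + Real.sqrt Δ) / (2*(A*c1*c2 - B*c1^2)) ∨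
     αs = ((C*c1^2 - A*c2^2) - Real.sqrt Δ) / (2*(A*c1*c2 - B*c1^2))) := by
  have hS := sq_add_sq_pos_of_ne_zero hnz
  have hlin : (A*c2 - B*c1)*αs - (C*c1 - B*c2) = 0 := by
    rw [hαs, mul_div_cancel₀ _ hAB, sub_self]
  have hden : c1*αs + c2 ≠ 0 := by
    have : (c1*αs + c2) * (A*c2 - B*c1) = (a1*c2 - a2*c1)^2 + (b1*c2 - b2*c1)^2 := by
      rw [cross_sq_add_sq_eq hA hB hC]; linear_combination c1 * hlin
    exact left_ne_zero_of_mul (this ▸ hS.ne')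
  have hroot : (A*c1*c2 - B*c1^2)*αs^2 + (A*c2^2 - C*c1^2)*αs + (B*c2^2 - C*c1*c2) = 0 := by
    linear_combination (c1*αs + c2) * hlin
  have hlead : A*c1*c2 - B*c1^2 ≠ 0 := by
    rw [show A*c1*c2 - B*c1^2 = c1*(A*c2 - B*c1) by ring]
    exact mul_ne_zero hc1 hAB
  have hΔ' : Δ = discrim (A*c1*c2 - B*c1^2) (A*c2^2 - C*c1^2) (B*c2^2 - C*c1*c2) := by
    rw [hΔ, discrim]
  obtain ⟨hΔnn, hformula⟩ := nonneg_discrim_and_eq_quadratic_formula hlead hroot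
  rw [← hΔ', neg_sub] at hformula
  refine ⟨hden, fun α hα => ?_, hroot, hlead, hΔ' ▸ hΔnn, hformula⟩
  rw [hg, hg]
  exact div_sq_le_div_sq_of_mul_sub_eq_sq hS (sq_add_sq_mul_sub_gram_eq_inner_sq hA hB hC) hlin hden hα
end

section
/- Let X°_1,…,X°_M ∈ ℝ³ and let P°_1,…,P°_N be real 3×4 matrices such that p°_{3,n}·[X°_m;1] ≠ 0 for all m, n (where p°_{3,n} is the third row of P°_n), and let x̂_m^{(n)} ∈ ℝ² be given image points. Set x̆_m^{(n)} = π_{P°_n}(X°_m). For each n, let R*_n be a 2×2 real orthogonal matrix and t*_n ∈ ℝ² such that (R*_n, t*_n) minimizes the function (R, t) ↦ Σ_{m=1}^{M} ‖R·x̆_m^{(n)} + t − x̂_m^{(n)}‖₂² over all 2×2 real orthogonal matrices R and all t ∈ ℝ². Define P*_n = S_n·P°_n, where S_n is the 3×3 matrix with top-left 2×2 block R*_n, top-right 2×1 block t*_n, and third row (0,0,1). Then the third row of P*_n equals p°_{3,n} (so π_{P*_n}(X°_m) is defined), and Σ_{m=1}^{M} Σ_{n=1}^{N} ‖π_{P*_n}(X°_m)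 − x̂_m^{(n)}‖₂² ≤ Σ_{m=1}^{M} Σ_{n=1}^{N} ‖x̆_m^{(n)} − x̂_m^{(n)}‖₂². -/
open Matrix

noncomputable section

/-- Projected image point `π_P(X)` of a world point `X` under a 3×4 projection matrix. -/
def proj (P : Matrix (Fin 3) (Fin 4) ℝ) (X : Fin 3 → ℝ) : Fin 2 → ℝ :=
  fun i => P.mulVec (lift3 X) (Fin.castSucc i) / P.mulVec (lift3 X) 2

/-- Squared Euclidean norm `‖v‖₂²` on `ℝ²`. -/
def sqnorm (v : Fin 2 → ℝ) : ℝ := ∑ i, (v i)^2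

/-- Proposition 4: adjusting each projection matrix by the optimal planar
rotation/reflection and translation (the absolute-orientation fit of the reprojected
points to the measured points) keeps third rows and does not increase the total squared
reprojection error. -/
theorem stmt14 {M N : ℕ}
    (X0 : Fin M → Fin 3 → ℝ) (P0 : Fin N → Matrix (Fin 3) (Fin 4) ℝ)
    (hden : ∀ m n, (P0 n).mulVec (lift3 (X0 m)) 2 ≠ 0)
    (xh : Fin M → Fin N → Fin 2 → ℝ)
    (xb : Fin M → Fin N → Fin 2 → ℝ) (hxb : ∀ m n, xb m n = proj (P0 n) (X0 m))
    (R : Fin N → Matrix (Fin 2) (Fin 2) ℝ) (t : Fin N → Fin 2 → ℝ)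
    (hRorth : ∀ n, (R n)ᵀ * R n = 1)
    (hmin : ∀ n, ∀ R' : Matrix (Fin 2) (Fin 2) ℝ, R'ᵀ * R' = 1 → ∀ t' : Fin 2 → ℝ,
      (∑ m, sqnorm ((R n).mulVec (xb m n) + t n - xh m n)) ≤
        ∑ m, sqnorm (R'.mulVec (xb m n) + t' - xh m n))
    (S : Fin N → Matrix (Fin 3) (Fin 3) ℝ)
    (hS : ∀ n, S n = !![R n 0 0, R n 0 1, t n 0; R n 1 0, R n 1 1, t n 1; 0, 0, 1])
    (Ps : Fin N → Matrix (Fin 3) (Fin 4) ℝ) (hPs : ∀ n, Ps n = S n * P0 n) :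
    (∀ n, (Ps n) 2 = (P0 n) 2) ∧
    (∑ m, ∑ n, sqnorm (proj (Ps n) (X0 m) - xh m n)) ≤
      ∑ m, ∑ n, sqnorm (xb m n - xh m n) := by

  have hrow3 : ∀ n, (Ps n) 2 = (P0 n) 2 := by
    intro n
    rw [hPs, hS]
    ext j
    simp [Matrix.mul_apply, Fin.sum_univ_three]
  refine ⟨hrow3, ?_⟩
  have key : ∀ m n, proj (Ps n) (X0 m) = (R n).mulVec (xb m n) + t n := by
    intro m n
    have hw := hden m n
    have hmv : (Ps n).mulVec (lift3 (X0 m)) = (S n).mulVec ((P0 n).mulVec (lift3 (X0 m))) := by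
      rw [hPs, Matrix.mulVec_mulVec]
    set w := (P0 n).mulVec (lift3 (X0 m)) with hwdef
    have hx : xb m n = fun i => w (Fin.castSucc i) / w 2 := by
      rw [hxb]; rfl
    funext i
    fin_cases i <;>
    · simp only [proj, hmv, hS, hx, Pi.add_apply]
      simp [Matrix.mulVec, dotProduct, Fin.sum_univ_three, Fin.sum_univ_two]
      field_simp
      try ring
  calc ∑ m, ∑ n, sqnorm (proj (Ps n) (X0 m) - xh m n)
      = ∑ n, ∑ m, sqnorm ((R n).mulVec (xb m n) + t n - xh m n) := by
        rw [Finset.sum_comm]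
        exact Finset.sum_congr rfl fun n _ => Finset.sum_congr rfl fun m _ => by rw [key]
    _ ≤ ∑ n, ∑ m, sqnorm ((1 : Matrix (Fin 2) (Fin 2) ℝ).mulVec (xb m n) + 0 - xh m n) := by
        refine Finset.sum_le_sum fun n _ => hmin n 1 (by simp) 0
    _ = ∑ m, ∑ n, sqnorm (xb m n - xh m n) := by
        rw [Finset.sum_comm]; simp
end
end
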